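/- Let σ be a 2×2 Hermitian complex matrix. Then its robustness of imaginarity in the x-basis equals |Re Tr(σ·σy)| and its robustness of imaginarity in the y-basis equals |Re Tr(σ·σx)|, i.e. 𝓘ˣ(σ) = |Re Tr(σ·σy)| and 𝓘ʸ(σ) = |Re Tr(σ·σx)|. -/

import Mathlib

/-! For a 2×2 matrix, `ρ - ρᵀ = !![0, d; -d, 0]` with `d = ρ₀₁ - ρ₁₀`; since
`(ρ - ρᵀ)ᴴ(ρ - ρᵀ)` is the scalar `|d|²`, we get `𝓘(ρ) = |d| = ‖Tr(ρ σy)‖`. By cyclicity of the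
trace the basis change moves onto `σy`, and `H σy H = -σy`, `V σy Vᴴ = σx`. Finally, the trace of a
product of two Hermitian matrices is real, so its norm is the absolute value of its real part. -/

open Matrix Kronecker
open scoped ComplexOrder

/-- Trace norm of a square complex matrix: `Tr[sqrt(Aᴴ A)]`. -/
noncomputable def traceNorm {n : Type*} [Fintype n] [DecidableEq n]
    (A : Matrix n n ℂ) : ℝ :=
  (((Matrix.posSemidef_conjTranspose_mul_self A).1.eigenvectorUnitary.1 *
      diagonal ((fun x : ℝ => (x : ℂ)) ∘ (Real.sqrt ∘ (Matrix.posSemidef_conjTranspose_mul_self A).1.eigenvalues)) *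
      (star (Matrix.posSemidef_conjTranspose_mul_self A).1.eigenvectorUnitary : Matrix n n ℂ)).trace).re

/-- Robustness of imaginarity: `(1/2) ‖ρ - ρᵀ‖₁`. -/
noncomputable def roi {n : Type*} [Fintype n] [DecidableEq n]
    (ρ : Matrix n n ℂ) : ℝ :=
  (1 / 2) * traceNorm (ρ - ρ.transpose)

def σx : Matrix (Fin 2) (Fin 2) ℂ := !![0, 1; 1, 0]
def σy : Matrix (Fin 2) (Fin 2) ℂ := !![0, -Complex.I; Complex.I, 0]

/-- Hadamard matrix (x-basis change). -/
noncomputable def Hm : Matrix (Fin 2) (Fin 2) ℂ :=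
  (Real.sqrt 2 : ℂ)⁻¹ • !![1, 1; 1, -1]
/-- Eigenvector matrix of σy (y-basis change). -/
noncomputable def Vm : Matrix (Fin 2) (Fin 2) ℂ :=
  (Real.sqrt 2 : ℂ)⁻¹ • !![1, 1; Complex.I, -Complex.I]

/-- Robustness of imaginarity in the x-basis. -/
noncomputable def roiX (σ : Matrix (Fin 2) (Fin 2) ℂ) : ℝ := roi (Hm * σ * Hm)
/-- Robustness of imaginarity in the y-basis. -/
noncomputable def roiY (σ : Matrix (Fin 2) (Fin 2) ℂ) : ℝ := roi (Vmᴴ * σ * Vm)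

namespace Matrix

lemma IsHermitian.eigenvalues_eq_of_eq_algebraMap {𝕜 n : Type*} [RCLike 𝕜] [Fintype n]
    [DecidableEq n] {A : Matrix n n 𝕜} (hA : A.IsHermitian) {r : ℝ} (h : A = algebraMap ℝ _ r)
    (i : n) : hA.eigenvalues i = r := by
  subst h
  have : Nonempty n := ⟨i⟩
  simpa [spectrum.scalar_eq] using hA.eigenvalues_mem_spectrum_real i

lemma IsHermitian.im_trace_mul {𝕜 n : Type*} [RCLike 𝕜] [Fintype n] {A B : Matrix n n 𝕜}
    (hA : A.IsHermitian) (hB : B.IsHermitian) : RCLike.im (A * B).trace = 0 := by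
  rw [← RCLike.conj_eq_iff_im, ← RCLike.star_def, ← trace_conjTranspose,
    conjTranspose_mul, hA.eq, hB.eq, trace_mul_comm]

end Matrix

lemma traceNorm_eq_sum_sqrt_eigenvalues {n : Type*} [Fintype n] [DecidableEq n]
    (A : Matrix n n ℂ) :
    traceNorm A = ∑ i, √((posSemidef_conjTranspose_mul_self A).1.eigenvalues i) := by
  rw [traceNorm, trace_mul_cycle, Unitary.coe_star_mul_self, one_mul, trace_diagonal]
  simp

lemma traceNorm_of_conjTranspose_mul_self_eq_algebraMap {n : Type*} [Fintype n] [DecidableEq n]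
    {A : Matrix n n ℂ} {r : ℝ} (h : Aᴴ * A = algebraMap ℝ _ r) :
    traceNorm A = Fintype.card n * √r := by
  simp [traceNorm_eq_sum_sqrt_eigenvalues,
    (posSemidef_conjTranspose_mul_self A).1.eigenvalues_eq_of_eq_algebraMap h]

lemma traceNorm_skew_fin_two (c : ℂ) : traceNorm !![0, c; -c, 0] = 2 * ‖c‖ := by
  have h : (!![0, c; -c, 0])ᴴ * !![0, c; -c, 0] =
      algebraMap ℝ (Matrix (Fin 2) (Fin 2) ℂ) (‖c‖ ^ 2) := by
    ext i j
    fin_cases i <;> fin_cases j <;>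
      simp [mul_apply, Fin.sum_univ_two, Complex.conj_mul', algebraMap_eq_diagonal]
  rw [traceNorm_of_conjTranspose_mul_self_eq_algebraMap h, Real.sqrt_sq (norm_nonneg c)]
  simp

lemma roi_fin_two_eq_norm_trace_mul_σy (ρ : Matrix (Fin 2) (Fin 2) ℂ) :
    roi ρ = ‖(ρ * σy).trace‖ := by
  have hskew : ρ - ρᵀ = !![0, ρ 0 1 - ρ 1 0; -(ρ 0 1 - ρ 1 0), 0] := by
    ext i j
    fin_cases i <;> fin_cases j <;> simp
  have htrace : (ρ * σy).trace = Complex.I * (ρ 0 1 - ρ 1 0) := by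
    simp [trace_fin_two, σy, mul_apply, Fin.sum_univ_two]
    ring
  rw [roi, hskew, traceNorm_skew_fin_two, htrace, norm_mul, Complex.norm_I]
  ring

lemma inv_sqrt_two_sq : ((Real.sqrt 2 : ℂ)⁻¹) ^ 2 = 1 / 2 := by
  rw [inv_pow, ← Complex.ofReal_pow, Real.sq_sqrt zero_le_two]
  simp

lemma Hm_mul_σy_mul_Hm : Hm * σy * Hm = -σy := by
  rw [Hm, smul_mul_assoc, smul_mul_assoc, mul_smul_comm, smul_smul, ← sq, inv_sqrt_two_sq]
  ext i j
  fin_cases i <;> fin_cases j <;> simp [σy] <;> ring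

lemma Vm_mul_σy_mul_conjTranspose_Vm : Vm * σy * Vmᴴ = σx := by
  rw [Vm, conjTranspose_smul, smul_mul_assoc, smul_mul_assoc, mul_smul_comm, smul_smul]
  simp only [star_inv₀, Complex.star_def, Complex.conj_ofReal, ← sq, inv_sqrt_two_sq]
  ext i j
  fin_cases i <;> fin_cases j <;> simp [σx, σy, vecMul, dotProduct, Fin.sum_univ_two] <;> ring

lemma roiX_eq_norm_trace_mul_σy (σ : Matrix (Fin 2) (Fin 2) ℂ) :
    roiX σ = ‖(σ * σy).trace‖ := by
  rw [roiX, roi_fin_two_eq_norm_trace_mul_σy, mul_assoc (Hm * σ), mul_assoc Hm,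
    trace_mul_comm Hm, mul_assoc σ, Hm_mul_σy_mul_Hm, mul_neg, trace_neg, norm_neg]

lemma roiY_eq_norm_trace_mul_σx (σ : Matrix (Fin 2) (Fin 2) ℂ) :
    roiY σ = ‖(σ * σx).trace‖ := by
  rw [roiY, roi_fin_two_eq_norm_trace_mul_σy, mul_assoc (Vmᴴ * σ), mul_assoc Vmᴴ,
    trace_mul_comm Vmᴴ, mul_assoc σ, Vm_mul_σy_mul_conjTranspose_Vm]

lemma isHermitian_σx : σx.IsHermitian := by
  ext i j
  fin_cases i <;> fin_cases j <;> simp [σx]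

lemma isHermitian_σy : σy.IsHermitian := by
  ext i j
  fin_cases i <;> fin_cases j <;> simp [σy]

/-- For a 2×2 Hermitian matrix, `𝓘ˣ(σ) = |Re Tr(σ·σy)|` and
`𝓘ʸ(σ) = |Re Tr(σ·σx)|`. -/
theorem stmt2 (σ : Matrix (Fin 2) (Fin 2) ℂ) (hσ : σ.IsHermitian) :
    roiX σ = |((σ * σy).trace).re| ∧ roiY σ = |((σ * σx).trace).re| := by
  rw [roiX_eq_norm_trace_mul_σy, roiY_eq_norm_trace_mul_σx,
    Complex.abs_re_eq_norm.2 (hσ.im_trace_mul isHermitian_σy),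
    Complex.abs_re_eq_norm.2 (hσ.im_trace_mul isHermitian_σx)]
  exact ⟨rfl, rfl⟩
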